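/- arXiv:0901.2109 — 5 statements merged into one kernel-verified Lean document; each statement's English description precedes it below -/
import Mathlib

section
/- For all integers m ≥ 1 and ℓ ≥ 0, the quotient ring ℤ[y]/(σ_{m−1}(y), y^{ℓ+1}) is finite and has exactly m^{ℓ+1} elements. (This is the additive content of the collapsing twisted Serre spectral sequence in the proof of Theorem 1.2: the quotient carries a finite filtration with associated graded group (ℤ/m)[y]/(y^{ℓ+1}).) -/
open Polynomial

/-- The Chebyshev-like polynomials: `symPoly 0 = 1`, `symPoly 1 = X`,
`symPoly (k+2) = X * symPoly (k+1) - symPoly k`. -/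
noncomputable def symPoly : ℕ → ℤ[X]
  | 0 => 1
  | 1 => X
  | (k+2) => X * symPoly (k+1) - symPoly k

/-- `σ_{m-1}(y) = Sym_{m-1}(y+2)`. -/
noncomputable def sigmaPoly (m : ℕ) : ℤ[X] := (symPoly (m-1)).comp (X + 2)

lemma symPoly_eval_two : ∀ k, (symPoly k).eval 2 = (k : ℤ) + 1
  | 0 => by simp [symPoly]
  | 1 => by simp [symPoly]
  | (k+2) => by
      rw [symPoly, eval_sub, eval_mul, eval_X, symPoly_eval_two (k+1), symPoly_eval_two k]
      push_cast; ring

lemma sigma_eval_zero (m : ℕ) (hm : 1 ≤ m) : (sigmaPoly m).eval 0 = (m : ℤ) := by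
  rw [sigmaPoly, eval_comp]
  simp only [eval_add, eval_X, eval_ofNat, zero_add, symPoly_eval_two]
  rw [Nat.cast_sub hm]; ring

lemma sigma_split (m : ℕ) (hm : 1 ≤ m) :
    ∃ q : ℤ[X], sigmaPoly m - C (m:ℤ) = X * q := by
  have : (X:ℤ[X]) ∣ sigmaPoly m - C (m:ℤ) := by
    rw [X_dvd_iff, coeff_sub, coeff_zero_eq_eval_zero, sigma_eval_zero m hm, coeff_C]
    simp
  exact this

lemma m_mem (m : ℕ) (hm : 1 ≤ m) (ℓ : ℕ) :
    (C (m:ℤ)) * X ^ ℓ ∈ Ideal.span {sigmaPoly m, (X:ℤ[X]) ^ (ℓ+1)} := by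
  obtain ⟨q, hq⟩ := sigma_split m hm
  rw [Ideal.mem_span_pair]
  exact ⟨X ^ ℓ, -q, by linear_combination (X:ℤ[X])^ℓ * hq⟩

lemma key_dvd (m : ℕ) (hm : 1 ≤ m) :
    ∀ (ℓ : ℕ) (c : ℤ), (C c) * X ^ ℓ ∈ Ideal.span {sigmaPoly m, (X:ℤ[X]) ^ (ℓ+1)} →
      (m:ℤ) ∣ c := by
  intro ℓ
  induction ℓ with
  | zero =>
    intro c hc
    rw [Ideal.mem_span_pair] at hc
    obtain ⟨a, b, hab⟩ := hc
    have h0 := congrArg (eval 0) hab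
    simp [sigma_eval_zero m hm] at h0
    exact ⟨a.eval 0, by linarith⟩
  | succ ℓ ih =>
    intro c hc
    rw [Ideal.mem_span_pair] at hc
    obtain ⟨a, b, hab⟩ := hc
    have h0 : a.eval 0 * (m:ℤ) = 0 := by
      have := congrArg (eval 0) hab
      simpa [sigma_eval_zero m hm] using this
    have hm0 : (m:ℤ) ≠ 0 := by exact_mod_cast (Nat.pos_of_ne_zero (by omega)).ne'
    have ha0 : (X:ℤ[X]) ∣ a := by
      rw [X_dvd_iff, coeff_zero_eq_eval_zero]
      exact (mul_eq_zero.mp h0).resolve_right hm0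
    obtain ⟨a1, rfl⟩ := ha0
    have hcan : (X:ℤ[X]) * (a1 * sigmaPoly m + b * X ^ (ℓ+1)) = X * (C c * X ^ ℓ) := by
      linear_combination hab
    have := mul_left_cancel₀ (X_ne_zero (R := ℤ)) hcan
    exact ih c (Ideal.mem_span_pair.mpr ⟨a1, b, this⟩)

lemma base_case (m : ℕ) (hm : 1 ≤ m) :
    Nonempty ((ℤ[X] ⧸ Ideal.span {sigmaPoly m, (X:ℤ[X]) ^ 1}) ≃+* ZMod m) := by
  obtain ⟨q, hq⟩ := sigma_split m hm
  set φ : ℤ[X] →+* ZMod m := (Int.castRingHom (ZMod m)).comp (evalRingHom 0) with hφ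
  have hsurj : Function.Surjective φ := by
    intro z
    obtain ⟨k, rfl⟩ := ZMod.intCast_surjective z
    exact ⟨C k, by simp [hφ]⟩
  have hker : RingHom.ker φ = Ideal.span {sigmaPoly m, (X:ℤ[X]) ^ 1} := by
    apply le_antisymm
    · intro f hf
      rw [RingHom.mem_ker] at hf
      simp only [hφ, RingHom.comp_apply, coe_evalRingHom, Int.coe_castRingHom] at hf
      obtain ⟨k, hk⟩ := (ZMod.intCast_zmod_eq_zero_iff_dvd _ _).mp hf
      have hCm : C (m:ℤ) ∈ Ideal.span {sigmaPoly m, (X:ℤ[X]) ^ 1} := by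
        rw [Ideal.mem_span_pair]
        exact ⟨1, -q, by linear_combination hq⟩
      have hX : (X:ℤ[X]) ∈ Ideal.span {sigmaPoly m, (X:ℤ[X]) ^ 1} :=
        Ideal.subset_span (by simp)
      have hf2 : f = X * f.divX + C k * C (m:ℤ) := by
        rw [← map_mul, mul_comm k, ← hk, ← coeff_zero_eq_eval_zero, X_mul_divX_add]
      rw [hf2]
      exact Ideal.add_mem _ (Ideal.mul_mem_right _ _ hX) (Ideal.mul_mem_left _ _ hCm)
    · rw [Ideal.span_le]
      rintro f hf
      simp only [Set.mem_insert_iff, Set.mem_singleton_iff] at hf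
      rcases hf with rfl | rfl
      · show φ _ = 0
        simp [hφ, sigma_eval_zero m hm]
      · show φ _ = 0
        simp [hφ]
  exact ⟨(Ideal.quotEquivOfEq hker).symm.trans (RingHom.quotientKerEquivOfSurjective hsurj)⟩

lemma step (m : ℕ) (hm : 1 ≤ m) (ℓ : ℕ)
    (hfin : Finite (ℤ[X] ⧸ Ideal.span {sigmaPoly m, (X:ℤ[X]) ^ (ℓ+1)}))
    (hcard : Nat.card (ℤ[X] ⧸ Ideal.span {sigmaPoly m, (X:ℤ[X]) ^ (ℓ+1)}) = m ^ (ℓ+1)) :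
    Finite (ℤ[X] ⧸ Ideal.span {sigmaPoly m, (X:ℤ[X]) ^ (ℓ+2)}) ∧
      Nat.card (ℤ[X] ⧸ Ideal.span {sigmaPoly m, (X:ℤ[X]) ^ (ℓ+2)}) = m ^ (ℓ+2) := by
  set A := Ideal.span {sigmaPoly m, (X:ℤ[X]) ^ (ℓ+1)} with hA
  set B := Ideal.span {sigmaPoly m, (X:ℤ[X]) ^ (ℓ+2)} with hB
  have hBA : B ≤ A := by
    rw [hB, Ideal.span_le]
    rintro f hf
    simp only [Set.mem_insert_iff, Set.mem_singleton_iff] at hf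
    rcases hf with rfl | rfl
    · exact Ideal.subset_span (by simp)
    · have h2 : (X:ℤ[X]) ^ (ℓ+2) = X ^ (ℓ+1) * X := by ring
      rw [h2]
      exact Ideal.mul_mem_right _ _ (Ideal.subset_span (by simp))
  set φ : (ℤ[X] ⧸ B) →+* (ℤ[X] ⧸ A) :=
    Ideal.Quotient.lift B (Ideal.Quotient.mk A)
      (fun a ha => Ideal.Quotient.eq_zero_iff_mem.2 (hBA ha)) with hφ
  have hφmk : ∀ f : ℤ[X], φ (Ideal.Quotient.mk B f) = Ideal.Quotient.mk A f := fun f => rfl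
  have hsurj : Function.Surjective φ := by
    intro x
    obtain ⟨f, rfl⟩ := Ideal.Quotient.mk_surjective x
    exact ⟨Ideal.Quotient.mk B f, rfl⟩
  set gen : ℤ[X] ⧸ B := Ideal.Quotient.mk B (X ^ (ℓ+1)) with hgen
  have hsmul : ∀ c : ℤ, c • gen = Ideal.Quotient.mk B (C c * X ^ (ℓ+1)) := by
    intro c
    rw [hgen, ← map_zsmul]
    congr 1
    rw [zsmul_eq_mul]
    simp
  have hzero : ∀ c : ℤ, c • gen = 0 ↔ (m:ℤ) ∣ c := by
    intro c
    rw [hsmul, Ideal.Quotient.eq_zero_iff_mem]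
    constructor
    · exact key_dvd m hm (ℓ+1) c
    · rintro ⟨k, rfl⟩
      have := m_mem m hm (ℓ+1)
      rw [← hB] at this
      have h2 : C ((m:ℤ) * k) * X ^ (ℓ+1) = C k * (C (m:ℤ) * X ^ (ℓ+1)) := by
        rw [map_mul]; ring
      rw [h2]
      exact Ideal.mul_mem_left _ _ this
  have horder : addOrderOf gen = m := by
    rw [addOrderOf_eq_iff (by omega)]
    constructor
    · have := (hzero (m:ℤ)).mpr dvd_rfl
      rwa [natCast_zsmul] at this
    · intro n hn hn0 hne
      rw [← natCast_zsmul] at hne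
      have := (hzero (n:ℤ)).mp hne
      have : (m:ℤ) ≤ (n:ℤ) := Int.le_of_dvd (by exact_mod_cast hn0) this
      omega
  have hfo : IsOfFinAddOrder gen := by
    rw [← addOrderOf_pos_iff, horder]; omega
  have hker : φ.toAddMonoidHom.ker = AddSubgroup.zmultiples gen := by
    ext x
    constructor
    · intro hx
      have hx0 : φ x = 0 := hx
      obtain ⟨f, rfl⟩ := Ideal.Quotient.mk_surjective x
      rw [hφmk, Ideal.Quotient.eq_zero_iff_mem, hA, Ideal.mem_span_pair] at hx0
      obtain ⟨a, b, hab⟩ := hx0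
      rw [AddSubgroup.mem_zmultiples_iff]
      refine ⟨b.coeff 0, ?_⟩
      rw [hsmul]
      rw [Ideal.Quotient.mk_eq_mk_iff_sub_mem, hB, Ideal.mem_span_pair]
      exact ⟨-a, -b.divX, by linear_combination -hab - (X:ℤ[X])^(ℓ+1) * (X_mul_divX_add b)⟩
    · rintro ⟨k, rfl⟩
      show φ (k • gen) = 0
      rw [map_zsmul, hφmk]
      have : Ideal.Quotient.mk A (X ^ (ℓ+1)) = 0 :=
        Ideal.Quotient.eq_zero_iff_mem.2 (Ideal.subset_span (by simp))
      rw [this, smul_zero]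
  have e1 : ((ℤ[X] ⧸ B) ⧸ AddSubgroup.zmultiples gen) ≃+ (ℤ[X] ⧸ A) := by
    rw [← hker]
    exact QuotientAddGroup.quotientKerEquivOfSurjective φ.toAddMonoidHom hsurj
  have finK : Finite (AddSubgroup.zmultiples gen) := hfo.finite_zmultiples
  have finQ : Finite ((ℤ[X] ⧸ B) ⧸ AddSubgroup.zmultiples gen) :=
    Finite.of_equiv _ e1.symm.toEquiv
  have e2 : (ℤ[X] ⧸ B) ≃ ((ℤ[X] ⧸ B) ⧸ AddSubgroup.zmultiples gen) × (AddSubgroup.zmultiples gen) :=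
    AddSubgroup.addGroupEquivQuotientProdAddSubgroup
  refine ⟨Finite.of_equiv _ e2.symm, ?_⟩
  rw [Nat.card_congr e2, Nat.card_prod, Nat.card_congr e1.toEquiv, hcard,
    Nat.card_zmultiples, horder]
  ring

/-- The additive content of Theorem 1.2: `ℤ[y]/(σ_{m-1}(y), y^{ℓ+1})` is finite with
exactly `m^{ℓ+1}` elements. -/
theorem stmt4 (m ℓ : ℕ) (hm : 1 ≤ m) :
    Finite (ℤ[X] ⧸ Ideal.span {sigmaPoly m, X ^ (ℓ+1)}) ∧
    Nat.card (ℤ[X] ⧸ Ideal.span {sigmaPoly m, X ^ (ℓ+1)}) = m ^ (ℓ+1) := by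
  haveI : NeZero m := ⟨by omega⟩
  induction ℓ with
  | zero =>
    obtain ⟨e⟩ := base_case m hm
    refine ⟨Finite.of_equiv _ e.toEquiv.symm, ?_⟩
    rw [Nat.card_congr e.toEquiv, Nat.card_zmod, pow_one]
  | succ ℓ ih =>
    exact step m hm ℓ ih.1 ih.2
end

section
/- For every prime p and every integer m ≥ 1, write c_i for the coefficient of y^i in σ_{m−1}(y). Then p divides c_i for all i < δ(p,m), and p does not divide c_{δ(p,m)}; that is, δ(p,m) is the least index i such that p ∤ c_i. (This is the arithmetic content of Proposition 7.5 of the paper: the condition 'p ∤ c_ℓ and p | c_i for all i < ℓ' holds if and only if ℓ = δ(p,m).) -/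
open Polynomial

/-- `δ(p,m)`: with `i` the `p`-adic valuation of `m`, this is `2^i - 1` for `p = 2`
and `(p^i - 1)/2` for odd `p`. -/
def deltaPM (p m : ℕ) : ℕ :=
  if p = 2 then 2 ^ (m.factorization p) - 1 else (p ^ (m.factorization p) - 1) / 2

/-!
Expanding `Sym_k(y + 2)` gives `c_i = binom(m + i, 2i + 1)`. Write `m = p^v M` with `p ∤ M`.
Lucas' theorem in base `p^v` gives `binom(p^v M + i, 2i + 1) ≡ binom(M, 0) binom(i, 2i + 1) = 0`
when `2i + 1 < p^v`, and `≡ binom(M, 1) binom(i, 0) = M` when `2i + 1 = p^v`; for odd `p` this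
covers the whole range `i ≤ δ`. For `p = 2` the range is `i < 2^v`, and peeling off the last
binary digit with Lucas' theorem gives `0` when `i` is even and reduces `(v, i)` to
`(v - 1, (i - 1) / 2)` when `i` is odd.
-/

open Nat

theorem coeff_symPoly_comp_X_add_two :
    ∀ k i : ℕ, ((symPoly k).comp (X + 2)).coeff i = ((k + 1 + i).choose (2 * i + 1) : ℤ)
  | 0, 0 => by simp [symPoly]
  | 0, i + 1 => by
    simp [symPoly, coeff_one, choose_eq_zero_of_lt (by omega : 1 + (i + 1) < 2 * (i + 1) + 1)]
  | 1, 0 => by simp [symPoly]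
  | 1, 1 => by simp [symPoly]
  | 1, i + 2 => by
    simp [symPoly, coeff_X,
      choose_eq_zero_of_lt (by omega : 1 + 1 + (i + 2) < 2 * (i + 2) + 1)]
  | k + 2, i => by
    have hrec : (symPoly (k + 2)).comp (X + 2) =
        X * (symPoly (k + 1)).comp (X + 2) + C 2 * (symPoly (k + 1)).comp (X + 2) -
          (symPoly k).comp (X + 2) := by
      simp only [symPoly, sub_comp, mul_comp, X_comp, C_ofNat]
      ring
    rw [hrec]
    rcases i with _ | i
    · simp only [coeff_sub, coeff_add, mul_coeff_zero, coeff_X_zero, zero_mul, coeff_C_zero,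
        coeff_symPoly_comp_X_add_two (k + 1) 0, coeff_symPoly_comp_X_add_two k 0]
      simp only [add_zero, mul_zero, zero_add, choose_one_right, cast_add, cast_one]
      ring
    · simp only [coeff_sub, coeff_add, coeff_X_mul, coeff_C_mul,
        coeff_symPoly_comp_X_add_two (k + 1), coeff_symPoly_comp_X_add_two k]
      rw [show k + 2 + 1 + (i + 1) = k + 1 + i + 1 + 1 + 1 by ring,
        show k + 1 + 1 + (i + 1) = k + 1 + i + 1 + 1 by ring,
        show k + 1 + (i + 1) = k + 1 + i + 1 by ring, show k + 1 + 1 + i = k + 1 + i + 1 by ring,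
        show 2 * (i + 1) + 1 = 2 * i + 1 + 1 + 1 by ring]
      simp only [choose_succ_succ', cast_add]
      ring

theorem coeff_sigmaPoly {m : ℕ} (hm : m ≠ 0) (i : ℕ) :
    (sigmaPoly m).coeff i = ((m + i).choose (2 * i + 1) : ℤ) := by
  rw [sigmaPoly, coeff_symPoly_comp_X_add_two, Nat.sub_add_cancel (one_le_iff_ne_zero.mpr hm)]

theorem choose_pow_mul_add_modEq {p : ℕ} [hp : Fact p.Prime] (v : ℕ) {a b c d : ℕ}
    (hb : b < p ^ v) (hd : d < p ^ v) :
    (p ^ v * a + b).choose (p ^ v * c + d) ≡ a.choose c * b.choose d [ZMOD p] := by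
  induction v generalizing b d with
  | zero => simp_all [Int.ModEq.refl]
  | succ v ih =>
    have hlt {x : ℕ} (hx : x < p ^ (v + 1)) : x / p < p ^ v :=
      Nat.div_lt_of_lt_mul (by rwa [mul_comm, ← pow_succ])
    have hdigits (x y : ℕ) : (p ^ (v + 1) * x + y) % p = y % p ∧
        (p ^ (v + 1) * x + y) / p = p ^ v * x + y / p := by
      rw [pow_succ, mul_comm _ p, mul_assoc]
      exact ⟨Nat.mul_add_mod .., by rw [Nat.mul_add_div hp.out.pos]⟩
    grw [Choose.choose_modEq_choose_mod_mul_choose_div, (hdigits a b).1, (hdigits a b).2,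
      (hdigits c d).1, (hdigits c d).2, ih (hlt hb) (hlt hd),
      Choose.choose_modEq_choose_mod_mul_choose_div (n := b) (k := d) (p := p)]
    rw [mul_left_comm]

theorem choose_pow_mul_add_two_mul_add_one_modEq {p : ℕ} [Fact p.Prime] {v i : ℕ} (M : ℕ)
    (hi : 2 * i + 1 ≤ p ^ v) :
    (p ^ v * M + i).choose (2 * i + 1) ≡ if 2 * i + 1 = p ^ v then M else 0 [ZMOD p] := by
  split_ifs with h
  · simpa [h] using
      choose_pow_mul_add_modEq (p := p) (a := M) (b := i) (c := 1) (d := 0) v (by omega)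
        (by omega)
  · simpa [choose_eq_zero_of_lt (by omega : i < 2 * i + 1)] using
      choose_pow_mul_add_modEq (p := p) (a := M) (b := i) (c := 0) (d := 2 * i + 1) v
        (by omega) (by omega)

theorem choose_two_pow_mul_add_two_mul_add_one_modEq (M : ℕ) :
    ∀ {v i : ℕ}, i < 2 ^ v →
      (2 ^ v * M + i).choose (2 * i + 1) ≡ if i = 2 ^ v - 1 then M else 0 [ZMOD 2]
  | 0, 0, _ => by simp [Int.ModEq.refl]
  | v + 1, i, hi => by
    have := Fact.mk prime_two
    have lucas := Choose.choose_modEq_choose_mod_mul_choose_div (p := 2)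
      (n := 2 ^ (v + 1) * M + i) (k := 2 * i + 1)
    rw [pow_succ', mul_assoc] at lucas ⊢
    rw [pow_succ'] at hi
    obtain ⟨j, rfl | rfl⟩ := even_or_odd' i
    · rw [if_neg (by omega)]
      simpa [show (2 * (2 ^ v * M) + 2 * j) % 2 = 0 by omega] using lucas
    · rw [show (2 * (2 ^ v * M) + (2 * j + 1)) % 2 = 1 by omega,
        show (2 * (2 ^ v * M) + (2 * j + 1)) / 2 = 2 ^ v * M + j by omega,
        show (2 * (2 * j + 1) + 1) % 2 = 1 by omega,
        show (2 * (2 * j + 1) + 1) / 2 = 2 * j + 1 by omega, choose_self, cast_one,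
        one_mul] at lucas
      have ih := choose_two_pow_mul_add_two_mul_add_one_modEq M (v := v) (i := j) (by omega)
      simpa [show 2 * j + 1 = 2 * 2 ^ v - 1 ↔ j = 2 ^ v - 1 by omega] using lucas.trans ih

theorem choose_add_two_mul_add_one_modEq_of_le_deltaPM {p m i : ℕ} (hp : p.Prime)
    (hi : i ≤ deltaPM p m) :
    (m + i).choose (2 * i + 1) ≡
      if i = deltaPM p m then ((ordCompl[p] m : ℕ) : ℤ) else 0 [ZMOD p] := by
  have := Fact.mk hp
  nth_rw 1 [← ordProj_mul_ordCompl_eq_self m p]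
  by_cases hp2 : p = 2
  · subst hp2
    simp only [deltaPM, if_true] at hi ⊢
    exact choose_two_pow_mul_add_two_mul_add_one_modEq _
      (Nat.lt_of_le_sub_one (by positivity) hi)
  · simp only [deltaPM, hp2, if_false] at hi ⊢
    have hodd : p ^ m.factorization p % 2 = 1 := odd_iff.mp ((hp.odd_of_ne_two hp2).pow)
    simpa [show i = (p ^ m.factorization p - 1) / 2 ↔ 2 * i + 1 = p ^ m.factorization p by
      omega] using choose_pow_mul_add_two_mul_add_one_modEq (ordCompl[p] m) (by omega)

/-- Arithmetic content of Proposition 7.5: `δ(p,m)` is the least index `i` such that `p`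
does not divide the coefficient `c_i` of `y^i` in `σ_{m-1}(y)`. -/
theorem stmt5 (p m : ℕ) (hp : p.Prime) (hm : 1 ≤ m) :
    (∀ i < deltaPM p m, (p : ℤ) ∣ (sigmaPoly m).coeff i) ∧
      ¬ (p : ℤ) ∣ (sigmaPoly m).coeff (deltaPM p m) := by
  have hm0 : m ≠ 0 := one_le_iff_ne_zero.mp hm
  have key := fun i (hi : i ≤ deltaPM p m) =>
    choose_add_two_mul_add_one_modEq_of_le_deltaPM hp hi
  simp only [coeff_sigmaPoly hm0]
  refine ⟨fun i hi => ?_, ?_⟩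
  · have h := key i hi.le
    rw [if_neg hi.ne] at h
    exact Int.modEq_zero_iff_dvd.mp h
  · have h := key _ le_rfl
    rw [if_pos rfl] at h
    rw [h.dvd_iff, Int.natCast_dvd_natCast]
    exact not_dvd_ordCompl hp hm0
end

section
/- Theorem 3.1 (the Braun–Douglas number at representation level 1): for every integer n ≥ 2, D(n) = 2 if n + 2 is a power of 2, and D(n) = 1 otherwise. -/
/-- The dimensions of the level-1 irreducible representations of `Sp(n)`:
`d_i = C(2n, i) - C(2n, i-2)`, with `C(2n, j) = 0` for `j < 0`. -/
def dRep (n i : ℕ) : ℤ :=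
  ((2*n).choose i : ℤ) - if 2 ≤ i then ((2*n).choose (i-2) : ℤ) else 0

/-- The Braun–Douglas number `D(n)`: the gcd of the differences of the dimensions of the
two sides of the fusion relations `v_i·x = v_{i+1} + v_{i-1}` (for `1 ≤ i ≤ n-1`) and
`v_n·x = v_{n-1}`. -/
def braunDouglas (n : ℕ) : ℕ :=
  Nat.gcd ((2*(n:ℤ) * dRep n n - dRep n (n-1)).natAbs)
    (Finset.gcd (Finset.Icc 1 (n-1))
      (fun i => (2*(n:ℤ) * dRep n i - dRep n (i+1) - dRep n (i-1)).natAbs))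

/-!
Write `F_i = 2n·d_i - d_{i+1} - d_{i-1}` (with `d_{n+1} = 0`), so that
`D(n) = gcd_{1 ≤ i ≤ n} F_i` and `F_1 = n(2n+1)`.

An odd prime `q ∣ D(n)` divides `n` or `2n+1`. If `q ∣ n`, then `F_3 ≡ 1 - C(2n, 4) ≡ 1 (mod q)`
by Lucas' theorem. If `q ∣ 2n+1`, then `F_{j+2} ≡ C(2n+1, j) - C(2n+1, j+3) (mod q)`; at
`j = 0` this forces `C(2n+1, 3) ≡ 1`, which Lucas' theorem refutes for `q ≠ 3`; for `q = 3`,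
writing `2n+1 = 3m`, it gives `m ≡ 1 (mod 3)`, whence `C(2n+1, 6) ≡ C(m, 2) ≡ 0` contradicts
`j = 3`.

Modulo 2, `F_i ≡ C(2n+4, i+1)`, so `2 ∣ D(n)` iff `C(2n+4, 1), …, C(2n+4, 2n+3)` are all even,
i.e. iff `n + 2` is a power of 2. Then `n ≡ 2 (mod 4)`, so `4 ∤ F_1`.
-/

open Finset

lemma Nat.Prime.dvd_choose_of_dvd_of_not_dvd {p a b : ℕ} (hp : p.Prime) (ha : p ∣ a)
    (hb : ¬ p ∣ b) : p ∣ a.choose b := by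
  have := Fact.mk hp
  have hb : b % p ≠ 0 := fun h => hb (Nat.dvd_of_mod_eq_zero h)
  simpa [Nat.eq_zero_of_dvd_of_lt, Nat.mod_eq_zero_of_dvd ha, Nat.choose_eq_zero_of_lt,
    Nat.pos_of_ne_zero hb, Nat.modEq_zero_iff_dvd] using
    (Choose.choose_modEq_choose_mod_mul_choose_div_nat (n := a) (k := b) (p := p))

lemma Nat.Prime.forall_dvd_choose_iff {p N : ℕ} (hp : p.Prime) (hN : 0 < N) :
    (∀ j ∈ Icc 1 (N - 1), p ∣ N.choose j) ↔ ∃ k, N = p ^ k := by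
  have := Fact.mk hp
  constructor
  · intro h
    exact ⟨_, Choose.eq_pow_multiplicity_of_choose_modEq_zero_nat hN
      fun j hj => Nat.modEq_zero_iff_dvd.2 (h j hj)⟩
  · rintro ⟨k, rfl⟩ j hj
    rw [mem_Icc] at hj
    exact hp.dvd_choose_pow (by omega) (by omega)

lemma forall_two_dvd_choose_two_mul_iff {m : ℕ} (hm : 0 < m) :
    (∀ j ∈ Icc 1 (m - 1), 2 ∣ (2 * m).choose j) ↔ ∃ k, m = 2 ^ k := by
  have hsymm : (∀ j ∈ Icc 1 (m - 1), 2 ∣ (2 * m).choose j) ↔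
      ∀ j ∈ Icc 1 (2 * m - 1), 2 ∣ (2 * m).choose j := by
    refine ⟨fun h j hj => ?_, fun h j hj => h j (by simp only [mem_Icc] at hj ⊢; omega)⟩
    rw [mem_Icc] at hj
    rcases lt_trichotomy j m with hlt | rfl | hgt
    · exact h j (mem_Icc.2 ⟨hj.1, by omega⟩)
    · rw [← Nat.centralBinom_eq_two_mul_choose]
      exact Nat.two_dvd_centralBinom_of_one_le hm
    · rw [← Nat.choose_symm (by omega)]
      exact h _ (mem_Icc.2 ⟨by omega, by omega⟩)
  rw [hsymm, Nat.prime_two.forall_dvd_choose_iff (by omega)]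
  constructor
  · rintro ⟨k, hk⟩
    rcases k with _ | k
    · omega
    · exact ⟨k, by rw [pow_succ] at hk; omega⟩
  · rintro ⟨k, rfl⟩
    exact ⟨k + 1, by rw [pow_succ']⟩

def fusionDiff (n i : ℕ) : ℤ := 2 * (n : ℤ) * dRep n i - dRep n (i + 1) - dRep n (i - 1)

@[simp] lemma dRep_zero (n : ℕ) : dRep n 0 = 1 := by simp [dRep]

@[simp] lemma dRep_one (n : ℕ) : dRep n 1 = 2 * n := by simp [dRep]

@[simp] lemma dRep_add_two (n i : ℕ) :
    dRep n (i + 2) = (2 * n).choose (i + 2) - (2 * n).choose i := by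
  simp [dRep]

lemma dRep_succ_self (n : ℕ) : dRep n (n + 1) = 0 := by
  rcases n with _ | n
  · simp [dRep]
  · rw [show n + 1 + 1 = n + 2 by rfl, dRep_add_two,
      ← Nat.choose_symm_of_eq_add (by omega : 2 * (n + 1) = (n + 2) + n)]
    simp

lemma dvd_braunDouglas_iff {n c : ℕ} (hn : 1 ≤ n) :
    c ∣ braunDouglas n ↔ ∀ i ∈ Icc 1 n, (c : ℤ) ∣ fusionDiff n i := by
  have hIcc : Icc 1 n = insert n (Icc 1 (n - 1)) := by
    ext i; simp only [mem_insert, mem_Icc]; omega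
  simp only [braunDouglas, Nat.dvd_gcd_iff, Finset.dvd_gcd_iff, hIcc, forall_mem_insert,
    Int.natCast_dvd, fusionDiff, dRep_succ_self, sub_zero]

lemma cast_choose_two_mul_two (n : ℕ) : ((2 * n).choose 2 : ℤ) = n * (2 * n - 1) := by
  have h : ((2 * n).choose 2 : ℚ) = n * (2 * n - 1) := by
    rw [Nat.cast_choose_two]; push_cast; ring
  exact_mod_cast h

lemma fusionDiff_one (n : ℕ) : fusionDiff n 1 = n * (2 * n + 1) := by
  rw [fusionDiff, show 1 + 1 = 0 + 2 from rfl, dRep_add_two, zero_add, cast_choose_two_mul_two]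
  simp only [dRep_one, Nat.choose_zero_right, Nat.cast_one, Nat.sub_self, dRep_zero]
  ring

lemma fusionDiff_add_three (n j : ℕ) :
    fusionDiff n (j + 3) = 2 * n * dRep n (j + 3) - (2 * n).choose (j + 4) + (2 * n).choose j := by
  simp only [fusionDiff, show j + 3 + 1 = (j + 2) + 2 by rfl, show j + 3 - 1 = j + 2 by rfl,
    dRep_add_two]
  ring

lemma fusionDiff_add_two (n j : ℕ) :
    fusionDiff n (j + 2) =
      (2 * n + 1) * dRep n (j + 2) - (2 * n + 1).choose (j + 3) + (2 * n + 1).choose j := by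
  rcases j with _ | j
  · push_cast [fusionDiff, dRep_add_two, dRep_one, Nat.choose_succ_succ', Nat.choose_zero_right,
      Nat.choose_one_right]
    ring
  · push_cast [fusionDiff_add_three, dRep_add_two, Nat.choose_succ_succ']
    ring

-- Mod 2, `F_i ≡ C(2n, i+1) + C(2n, i-3)`, the coefficient of `X^(i+1)` in
-- `(1 + X)^(2n) (1 + X^4) = (1 + X)^(2n+4)`.
lemma fusionDiff_modEq_two (n : ℕ) {i : ℕ} (hi : 1 ≤ i) :
    fusionDiff n i ≡ (2 * (n + 2)).choose (i + 1) [ZMOD 2] := by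
  refine (ZMod.intCast_eq_intCast_iff _ _ 2).1 ?_
  rw [show 2 * (n + 2) = 2 * n + 4 by ring]
  obtain _ | _ | _ | j := i
  · omega
  · push_cast [fusionDiff_one, Nat.choose_succ_succ', Nat.choose_zero_right,
      cast_choose_two_mul_two]
    ring_nf
    reduce_mod_char
  · push_cast [fusionDiff_add_two, dRep_add_two, Nat.choose_succ_succ']
    ring_nf
    reduce_mod_char
  · push_cast [fusionDiff_add_three, dRep_add_two, Nat.choose_succ_succ']
    ring_nf
    reduce_mod_char

lemma two_dvd_braunDouglas_iff {n : ℕ} (hn : 1 ≤ n) :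
    2 ∣ braunDouglas n ↔ ∃ k, n + 2 = 2 ^ k := by
  rw [dvd_braunDouglas_iff hn, ← forall_two_dvd_choose_two_mul_iff (by omega : 0 < n + 2)]
  have hF : ∀ i ∈ Icc 1 n, (2 : ℤ) ∣ fusionDiff n i ↔ 2 ∣ (2 * (n + 2)).choose (i + 1) := by
    intro i hi
    rw [(fusionDiff_modEq_two n (mem_Icc.1 hi).1).dvd_iff]
    exact_mod_cast Iff.rfl
  rw [Nat.cast_ofNat, forall₂_congr hF, show n + 2 - 1 = n + 1 from rfl]
  constructor
  · intro h j hj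
    obtain ⟨hj1, hjn⟩ := mem_Icc.1 hj
    rcases hj1.eq_or_lt with rfl | hj1
    · simp
    · simpa [Nat.sub_add_cancel hj1.le] using h (j - 1) (mem_Icc.2 ⟨by omega, by omega⟩)
  · intro h i hi
    exact h (i + 1) (by simp only [mem_Icc] at hi ⊢; omega)

lemma not_dvd_braunDouglas_of_dvd {n q : ℕ} (hq : q.Prime) (hq2 : q ≠ 2) (hqn : q ∣ n)
    (hn : 0 < n) : ¬ q ∣ braunDouglas n := by
  intro hD
  have hn3 : 3 ≤ n := (hq.two_le.lt_of_ne' hq2).trans_le (Nat.le_of_dvd hn hqn)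
  have hF := (dvd_braunDouglas_iff (by omega)).1 hD 3 (mem_Icc.2 ⟨by norm_num, hn3⟩)
  have hC : q ∣ (2 * n).choose 4 := hq.dvd_choose_of_dvd_of_not_dvd (hqn.mul_left 2)
    fun h4 => hq2 <| (Nat.prime_dvd_prime_iff_eq hq Nat.prime_two).1 <|
      hq.dvd_of_dvd_pow (n := 2) h4
  rw [← ZMod.intCast_zmod_eq_zero_iff_dvd, show 3 = 0 + 3 from rfl,
    fusionDiff_add_three] at hF
  have := Fact.mk hq
  simp [(ZMod.natCast_eq_zero_iff _ _).2 hqn, (ZMod.natCast_eq_zero_iff _ _).2 hC] at hF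

lemma not_dvd_braunDouglas_of_dvd_two_mul_add_one {n q : ℕ} (hn : 2 ≤ n) (hq : q.Prime)
    (hqn : q ∣ 2 * n + 1) : ¬ q ∣ braunDouglas n := by
  intro hD
  have hshift : ∀ j, j + 2 ≤ n → (2 * n + 1).choose j ≡ (2 * n + 1).choose (j + 3) [MOD q] := by
    intro j hj
    have hF := (dvd_braunDouglas_iff (by omega)).1 hD (j + 2) (mem_Icc.2 ⟨by omega, hj⟩)
    have hqn' : (q : ℤ) ∣ 2 * n + 1 := by exact_mod_cast hqn
    have hdiff : ((2 * n + 1).choose (j + 3) - (2 * n + 1).choose j : ℤ) =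
        (2 * n + 1) * dRep n (j + 2) - fusionDiff n (j + 2) := by
      rw [fusionDiff_add_two]; ring
    rw [← Int.natCast_modEq_iff, Int.modEq_iff_dvd, hdiff]
    exact dvd_sub (hqn'.mul_right _) hF
  have h3 : (2 * n + 1).choose 3 ≡ 1 [MOD q] := by simpa using (hshift 0 (by omega)).symm
  by_cases hq3 : q = 3
  · subst hq3
    obtain ⟨m, hm⟩ := hqn
    rw [hm] at h3 hshift
    have := Fact.mk Nat.prime_three
    have hm1 : m % 3 = 1 := by
      have hlucas : (3 * m).choose 3 ≡ m [MOD 3] := by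
        simpa using Choose.choose_mul_mul_modEq_choose_nat (p := 3) (a := m) (b := 1)
      simpa [Nat.ModEq] using hlucas.symm.trans h3
    have h6 : (3 * m).choose 6 ≡ 0 [MOD 3] := by
      refine (Choose.choose_mul_mul_modEq_choose_nat (b := 2)).trans ?_
      simpa [hm1] using
        Choose.choose_modEq_choose_mod_mul_choose_div_nat (n := m) (k := 2) (p := 3)
    have := (h3.symm.trans (hshift 3 (by omega))).trans h6
    simp [Nat.ModEq] at this
  · have hC : q ∣ (2 * n + 1).choose 3 := hq.dvd_choose_of_dvd_of_not_dvd hqn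
      fun h => hq3 ((Nat.prime_dvd_prime_iff_eq hq Nat.prime_three).1 h)
    have h10 : 1 ≡ 0 [MOD q] := h3.symm.trans (Nat.modEq_zero_iff_dvd.2 hC)
    exact hq.one_lt.ne' (Nat.dvd_one.1 (Nat.modEq_zero_iff_dvd.1 h10))

lemma eq_two_of_prime_dvd_braunDouglas {n q : ℕ} (hn : 2 ≤ n) (hq : q.Prime)
    (hD : q ∣ braunDouglas n) : q = 2 := by
  by_contra hq2
  have hF := (dvd_braunDouglas_iff (by omega)).1 hD 1 (mem_Icc.2 ⟨le_rfl, by omega⟩)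
  rw [fusionDiff_one] at hF
  rcases hq.dvd_mul.1 (by exact_mod_cast hF) with hqn | hqn
  · exact not_dvd_braunDouglas_of_dvd hq hq2 hqn (by omega) hD
  · exact not_dvd_braunDouglas_of_dvd_two_mul_add_one hn hq hqn hD

lemma not_four_dvd_braunDouglas {n : ℕ} (hn : 2 ≤ n) : ¬ 4 ∣ braunDouglas n := by
  intro h4
  obtain ⟨k, hk⟩ := (two_dvd_braunDouglas_iff (by omega)).1 ((dvd_mul_left 2 2).trans h4)
  have hn4 : n % 4 = 2 := by
    obtain _ | _ | k := k
    · omega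
    · omega
    · rw [pow_add] at hk; omega
  have hF := (dvd_braunDouglas_iff (by omega)).1 h4 1 (mem_Icc.2 ⟨le_rfl, by omega⟩)
  rw [fusionDiff_one] at hF
  have hF' : 4 ∣ n * (2 * n + 1) := by exact_mod_cast hF
  rw [Nat.dvd_iff_mod_eq_zero, Nat.mul_mod, hn4, show (2 * n + 1) % 4 = 1 by omega] at hF'
  norm_num at hF'

lemma braunDouglas_dvd_two {n : ℕ} (hn : 2 ≤ n) : braunDouglas n ∣ 2 := by
  have hD0 : braunDouglas n ≠ 0 := by
    intro h0
    have hF := (dvd_braunDouglas_iff (n := n) (c := 0) (by omega)).1 (by rw [h0]) 1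
      (mem_Icc.2 ⟨le_rfl, by omega⟩)
    rw [Nat.cast_zero, zero_dvd_iff, fusionDiff_one] at hF
    exact mul_ne_zero (by omega) (by omega) hF
  obtain ⟨e, he⟩ : ∃ e, braunDouglas n = 2 ^ e :=
    ⟨_, Nat.eq_prime_pow_of_unique_prime_dvd hD0 (eq_two_of_prime_dvd_braunDouglas hn)⟩
  have he1 : e ≤ 1 := by
    by_contra he1
    exact not_four_dvd_braunDouglas hn (he ▸ pow_dvd_pow 2 (by omega : 2 ≤ e))
  rw [he]
  exact (pow_dvd_pow 2 he1).trans (pow_one 2).dvd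

/-- Theorem 3.1: for `n ≥ 2`, `D(n) = 2` when `n + 2` is a power of `2`, and
`D(n) = 1` otherwise. -/
theorem stmt6 (n : ℕ) (hn : 2 ≤ n) :
    ((∃ k : ℕ, n + 2 = 2 ^ k) → braunDouglas n = 2) ∧
    (¬ (∃ k : ℕ, n + 2 = 2 ^ k) → braunDouglas n = 1) := by
  have hdvd := braunDouglas_dvd_two hn
  have h2 := two_dvd_braunDouglas_iff (by omega : 1 ≤ n)
  refine ⟨fun hk => Nat.dvd_antisymm hdvd (h2.2 hk), fun hk => ?_⟩
  exact ((Nat.dvd_prime Nat.prime_two).1 hdvd).resolve_right fun h => hk (h2.1 (h ▸ dvd_rfl))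
end

section
/- Let m ≥ 1, let N be the 2-adic valuation of m, and let 0 ≤ s ≤ N. Then the 2-adic valuation of S(m, 2(2^s − 1)) is exactly N − s; i.e., 2^{N−s} divides S(m, 2(2^s − 1)) but 2^{N−s+1} does not. (The key 2-primary valuation computation in the proof of Theorem 4.4.) -/
/-!
Substituting `x = 2y` in `∑ₖ (1 + x)^(2k-1)` and using `(1 + 2y)^2 = 1 + 4y(1 + y)` turns the
generating function of `2^i S(m,i)` into `(1 + 2y) ∑ⱼ C(m, j+1) 4^j (y(1 + y))^j`. For
`i = 2J` with `J = 2^s - 1` the terms `j < J` do not reach degree `i`, the term `j = J` contributes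
`C(m, 2^s) 4^J (2J + 1)`, and every term `j > J` is divisible by `2^(2J + N - s + 1)`, because
`v₂ C(m, j+1) ≥ N - v₂(j+1)` while `4^j` supplies the rest. Finally `v₂ C(m, 2^s) = N - s`:
from `m C(m-1, 2^s-1) = 2^s C(m, 2^s)` and Lucas' theorem, which makes `C(m-1, 2^s-1)` odd.
-/

/-- `S(m,i) = Σ_{k=1}^{m} C(2k-1, i)`. -/
def Smi (m i : ℕ) : ℕ := ∑ k ∈ Finset.Icc 1 m, (2*k-1).choose i

open Finset Polynomial

theorem sum_range_add_one_pow {R : Type*} [CommSemiring R] (x : R) (m : ℕ) :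
    ∑ k ∈ range m, (x + 1) ^ k = ∑ j ∈ range m, m.choose (j + 1) • x ^ j := by
  induction m with
  | zero => simp
  | succ m ih =>
    rw [sum_range_succ, ih, add_pow]
    simp only [one_pow, mul_one, Nat.choose_succ_succ', add_smul, sum_add_distrib,
      sum_range_succ _ m, Nat.choose_succ_self, zero_smul, add_zero, ← nsmul_eq_mul']
    abel

theorem coeff_one_add_two_mul_X_pow (n i : ℕ) :
    ((1 + C 2 * X : ℕ[X]) ^ n).coeff i = n.choose i * 2 ^ i := by
  have : (1 + C 2 * X : ℕ[X]) ^ n = ((1 + X) ^ n).comp (C 2 * X) := by simp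
  rw [this, comp_C_mul_X_coeff, coeff_one_add_X_pow, Nat.cast_id]

theorem coeff_one_add_two_mul_X_mul_pow_two_mul (J : ℕ) :
    ((1 + C 2 * X : ℕ[X]) * (X * (1 + X)) ^ J).coeff (2 * J) = 2 * J + 1 := by
  have hsum : (1 + C 2 * X : ℕ[X]) * (1 + X) ^ J + (1 + X) ^ J = C 2 * (1 + X) ^ (J + 1) := by
    simp only [map_ofNat]; ring
  have hcoeff := congrArg (coeff · J) hsum
  simp only [coeff_add, coeff_C_mul, coeff_one_add_X_pow, Nat.choose_self,
    Nat.choose_succ_self_right, Nat.cast_id] at hcoeff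
  rw [mul_pow, mul_left_comm, two_mul, coeff_X_pow_mul]
  omega

theorem coeff_one_add_two_mul_X_mul_pow_two_mul_of_lt {j J : ℕ} (h : j < J) :
    ((1 + C 2 * X : ℕ[X]) * (X * (1 + X)) ^ j).coeff (2 * J) = 0 := by
  apply coeff_eq_zero_of_natDegree_lt
  have : ((1 + C 2 * X : ℕ[X]) * (X * (1 + X)) ^ j).natDegree ≤ 1 + j * 2 := by
    compute_degree
  omega

theorem sum_one_add_two_mul_X_pow_odd (m : ℕ) :
    ∑ k ∈ range m, (1 + C 2 * X : ℕ[X]) ^ (2 * k + 1) =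
      ∑ j ∈ range m, C (m.choose (j + 1) * 4 ^ j) * ((1 + C 2 * X) * (X * (1 + X)) ^ j) := by
  have hsq : (1 + C 2 * X : ℕ[X]) ^ 2 = C 4 * (X * (1 + X)) + 1 := by
    simp only [map_ofNat]; ring
  simp_rw [pow_succ _ (2 * _), pow_mul, hsq]
  rw [← sum_mul, sum_range_add_one_pow, sum_mul]
  refine sum_congr rfl fun j _ => ?_
  rw [smul_eq_C_mul, mul_pow, map_mul, C_pow]
  ring

theorem Smi_eq_sum_range (m i : ℕ) : Smi m i = ∑ k ∈ range m, (2 * k + 1).choose i := by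
  rw [Smi, ← Ico_add_one_right_eq_Icc, range_eq_Ico, ← sum_Ico_add' _ 0 m 1]
  simp [mul_add]

theorem two_pow_mul_Smi (m i : ℕ) :
    2 ^ i * Smi m i = ∑ j ∈ range m,
      m.choose (j + 1) * 4 ^ j * ((1 + C 2 * X : ℕ[X]) * (X * (1 + X)) ^ j).coeff i := by
  have := congrArg (coeff · i) (sum_one_add_two_mul_X_pow_odd m)
  simp only [finsetSum_coeff, coeff_one_add_two_mul_X_pow, coeff_C_mul] at this
  rw [Smi_eq_sum_range, mul_sum, ← this]
  exact sum_congr rfl fun k _ => mul_comm _ _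

theorem Smi_two_mul_eq {m J : ℕ} (hJ : J < m) :
    ∃ b : ℕ → ℕ, Smi m (2 * J) = m.choose (J + 1) * (2 * J + 1) +
      ∑ j ∈ Ico (J + 1) m, m.choose (j + 1) * 4 ^ (j - J) * b j := by
  set b : ℕ → ℕ := fun j => ((1 + C 2 * X : ℕ[X]) * (X * (1 + X)) ^ j).coeff (2 * J)
  have hb_lt : ∀ j ∈ range J, m.choose (j + 1) * 4 ^ j * b j = 0 := fun j hj => by
    simp only [b, coeff_one_add_two_mul_X_mul_pow_two_mul_of_lt (mem_range.mp hj), mul_zero]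
  have hb_J : b J = 2 * J + 1 := coeff_one_add_two_mul_X_mul_pow_two_mul J
  refine ⟨b, Nat.eq_of_mul_eq_mul_left (pow_pos (by norm_num : 0 < 4) J) ?_⟩
  calc 4 ^ J * Smi m (2 * J) = ∑ j ∈ range m, m.choose (j + 1) * 4 ^ j * b j := by
        rw [← two_pow_mul_Smi, pow_mul]; norm_num
    _ = m.choose (J + 1) * 4 ^ J * (2 * J + 1) +
          ∑ j ∈ Ico (J + 1) m, m.choose (j + 1) * 4 ^ j * b j := by
        rw [← sum_range_add_sum_Ico _ hJ, sum_range_succ, sum_eq_zero hb_lt, hb_J, zero_add]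
    _ = _ := by
        rw [mul_add (4 ^ J), mul_sum]
        congr 1
        · ring
        · refine sum_congr rfl fun j hj => ?_
          obtain ⟨d, rfl⟩ := Nat.exists_eq_add_of_le (Nat.le_of_succ_le (mem_Ico.mp hj).1)
          rw [Nat.add_sub_cancel_left, pow_add]
          ring

theorem factorization_add_one_add_factorization_choose {n k : ℕ} (h : k ≤ n) (p : ℕ) :
    (n + 1).factorization p + (n.choose k).factorization p =
      ((n + 1).choose (k + 1)).factorization p + (k + 1).factorization p := by
  have := congrArg (Nat.factorization · p) (Nat.add_one_mul_choose_eq n k)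
  simpa only [Nat.factorization_mul n.succ_ne_zero (Nat.choose_pos h).ne',
    Nat.factorization_mul (Nat.choose_pos (Nat.succ_le_succ h)).ne' k.succ_ne_zero,
    Finsupp.add_apply] using this

theorem pow_factorization_sub_dvd_choose (p : ℕ) {m k : ℕ} (hk : 0 < k) :
    p ^ (m.factorization p - k.factorization p) ∣ m.choose k := by
  rcases lt_or_ge m k with hmk | hkm
  · simp [Nat.choose_eq_zero_of_lt hmk]
  obtain ⟨k, rfl⟩ : ∃ k', k = k' + 1 := ⟨k - 1, by omega⟩
  obtain ⟨n, rfl⟩ : ∃ n, m = n + 1 := ⟨m - 1, by omega⟩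
  have := factorization_add_one_add_factorization_choose (Nat.le_of_succ_le_succ hkm) p
  exact (pow_dvd_pow p (by omega)).trans (Nat.ordProj_dvd _ p)

theorem not_dvd_choose_pow_mul_sub_one {p : ℕ} (hp : p.Prime) (s : ℕ) {a : ℕ} (ha : 0 < a) :
    ¬ p ∣ (p ^ s * a - 1).choose (p ^ s - 1) := by
  have := Fact.mk hp
  induction s with
  | zero => simp [hp.ne_one]
  | succ s ih =>
    have hps : 0 < p ^ s := pow_pos hp.pos s
    -- Both numbers end in the base-`p` digit `p - 1`; one step of Lucas' theorem strips it.
    have hdigit : ∀ x, 0 < x → p * x - 1 = (p - 1) + p * (x - 1) := fun x hx => by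
      obtain ⟨y, rfl⟩ : ∃ y, x = y + 1 := ⟨x - 1, by omega⟩
      have := hp.pos
      rw [mul_add, mul_one, Nat.add_sub_cancel]
      omega
    have hn : p ^ (s + 1) * a - 1 = (p - 1) + p * (p ^ s * a - 1) := by
      rw [pow_succ', mul_assoc, hdigit _ (Nat.mul_pos hps ha)]
    have hk : p ^ (s + 1) - 1 = (p - 1) + p * (p ^ s - 1) := by
      rw [pow_succ', hdigit _ hps]
    have hlucas := Choose.choose_modEq_choose_mod_mul_choose_div_nat
      (p := p) (n := p ^ (s + 1) * a - 1) (k := p ^ (s + 1) - 1)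
    rw [hn, hk, Nat.add_mul_mod_self_left, Nat.add_mul_div_left _ _ hp.pos,
      Nat.add_mul_mod_self_left, Nat.add_mul_div_left _ _ hp.pos,
      Nat.mod_eq_of_lt (Nat.sub_lt hp.pos one_pos), Nat.div_eq_of_lt (Nat.sub_lt hp.pos one_pos),
      Nat.choose_self, zero_add, zero_add, one_mul] at hlucas
    rw [hn, hk, Nat.dvd_iff_mod_eq_zero, hlucas, ← Nat.dvd_iff_mod_eq_zero]
    exact ih

theorem factorization_choose_prime_pow {p m s : ℕ} (hp : p.Prime) (hm : m ≠ 0)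
    (hdvd : p ^ s ∣ m) :
    (m.choose (p ^ s)).factorization p = m.factorization p - s := by
  obtain ⟨a, rfl⟩ := hdvd
  have ha : 0 < a := Nat.pos_of_ne_zero (right_ne_zero_of_mul hm)
  have hps : 0 < p ^ s := pow_pos hp.pos s
  have h := factorization_add_one_add_factorization_choose (n := p ^ s * a - 1) (k := p ^ s - 1)
    (Nat.sub_le_sub_right (Nat.le_mul_of_pos_right _ ha) 1) p
  rw [Nat.sub_add_cancel hps, Nat.sub_add_cancel (Nat.mul_pos hps ha),
    Nat.factorization_eq_zero_of_not_dvd (not_dvd_choose_pow_mul_sub_one hp s ha),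
    hp.factorization_pow, Finsupp.single_eq_same] at h
  omega

theorem factorization_pow_add_le {p : ℕ} (hp : p.Prime) (s d : ℕ) :
    (p ^ s + d).factorization p ≤ s + d := by
  have hd : p ^ s + d ≤ p ^ (s + d) := calc
    p ^ s + d ≤ p ^ s * (d + 1) := by nlinarith [Nat.one_le_pow s p hp.pos]
    _ ≤ p ^ s * 2 ^ d := Nat.mul_le_mul_left _ Nat.lt_two_pow_self
    _ ≤ p ^ (s + d) := by
      rw [pow_add]; exact Nat.mul_le_mul_left _ (Nat.pow_le_pow_left hp.two_le d)
  exact (Nat.pow_le_pow_iff_right hp.one_lt).mp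
    ((Nat.le_of_dvd (Nat.add_pos_left (pow_pos hp.pos s) d) (Nat.ordProj_dvd _ p)).trans hd)

theorem pow_dvd_choose_pow_add_mul_pow {p : ℕ} (hp : p.Prime) (m s : ℕ) {d : ℕ} (hd : 0 < d) :
    p ^ (m.factorization p - s + 1) ∣ m.choose (p ^ s + d) * p ^ (2 * d) := by
  have hv := factorization_pow_add_le hp s d
  have hexp : m.factorization p - s + 1 ≤
      m.factorization p - (p ^ s + d).factorization p + 2 * d := by omega
  refine (pow_dvd_pow p hexp).trans ?_
  rw [pow_add]
  exact mul_dvd_mul_right (pow_factorization_sub_dvd_choose p (by omega)) _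

theorem pow_dvd_add_and_not_pow_succ_dvd {p a b n : ℕ} (hp : p.Prime) (ha : a ≠ 0)
    (hfa : a.factorization p = n) (hb : p ^ (n + 1) ∣ b) :
    p ^ n ∣ a + b ∧ ¬ p ^ (n + 1) ∣ a + b := by
  subst hfa
  exact ⟨dvd_add (Nat.ordProj_dvd a p) ((pow_dvd_pow p (Nat.le_succ _)).trans hb),
    fun h => Nat.pow_succ_factorization_not_dvd ha hp ((Nat.dvd_add_left hb).mp h)⟩

/-- The 2-primary valuation computation in the proof of Theorem 4.4: with `N` the
2-adic valuation of `m` and `0 ≤ s ≤ N`, the 2-adic valuation of `S(m, 2(2^s - 1))`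
is exactly `N - s`. -/
theorem stmt9 (m s : ℕ) (hm : 1 ≤ m) (hs : s ≤ m.factorization 2) :
    2 ^ (m.factorization 2 - s) ∣ Smi m (2 * (2^s - 1)) ∧
    ¬ 2 ^ (m.factorization 2 - s + 1) ∣ Smi m (2 * (2^s - 1)) := by
  have hpos : 1 ≤ 2 ^ s := Nat.one_le_two_pow
  have hdvd : 2 ^ s ∣ m := (pow_dvd_pow 2 hs).trans (Nat.ordProj_dvd m 2)
  have hchoose : m.choose (2 ^ s) ≠ 0 := (Nat.choose_pos (Nat.le_of_dvd hm hdvd)).ne'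
  have hodd : ¬ 2 ∣ 2 * (2 ^ s - 1) + 1 := by omega
  obtain ⟨b, hS⟩ := Smi_two_mul_eq (show 2 ^ s - 1 < m by have := Nat.le_of_dvd hm hdvd; omega)
  rw [Nat.sub_add_cancel hpos] at hS
  rw [hS]
  refine pow_dvd_add_and_not_pow_succ_dvd Nat.prime_two (mul_ne_zero hchoose (by omega)) ?_ ?_
  · rw [Nat.factorization_mul hchoose (by omega), Finsupp.add_apply,
      factorization_choose_prime_pow Nat.prime_two (by omega) hdvd,
      Nat.factorization_eq_zero_of_not_dvd hodd, add_zero]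
  · refine dvd_sum fun j hj => dvd_mul_of_dvd_left ?_ _
    obtain ⟨hj, -⟩ := mem_Ico.mp hj
    obtain ⟨d, rfl⟩ : ∃ d, j = 2 ^ s - 1 + d := ⟨j - (2 ^ s - 1), by omega⟩
    rw [Nat.add_sub_cancel_left, show 2 ^ s - 1 + d + 1 = 2 ^ s + d by omega,
      show (4 : ℕ) = 2 ^ 2 from rfl, ← pow_mul]
    exact pow_dvd_choose_pow_add_mul_pow Nat.prime_two m s (by omega)
end

section
/- Theorem 4.4 (computation of the Braun–Douglas number d(m,n)): for all integers n ≥ 1 and m ≥ n + 2, gcd{ S(m, 2(i−1)) : 1 ≤ i ≤ n } = m / gcd(m, K(n)). -/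
/-- `K(n) = 2^⌊log₂ n⌋ · ∏_{p odd prime, p ≤ 2n} p^⌊log_p (2n)⌋`. -/
def Kn (n : ℕ) : ℕ :=
  2 ^ Nat.log 2 n *
    ∏ p ∈ (Finset.range (2*n+1)).filter (fun p => p.Prime ∧ Odd p),
      p ^ Nat.log p (2*n)

/-!
Writing `(1 + x) ^ (2k + 1) = (1 + x) (1 + x (x + 2)) ^ k` and summing over `k < m` gives
`S(m, 2j) = ∑ₛ a(j, s) C(m, s + 1)`, where `a(j, s) = smiCoeff j s` is the coefficient of
`x ^ (2j)` in `(1 + x) (x (x + 2)) ^ s`; it vanishes for `s > 2j` and is divisible by `4 ^ (s - j)`.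

From `t C(m, t) = m C(m - 1, t - 1)` we get `v_p C(m, t) ≥ v_p m - v_p t`, with equality for
`t = p ^ c ∣ m` because `C(p ^ c q - 1, p ^ c - 1) ≡ 1 [MOD p]` (Lucas). For `t ≤ 2n - 1` we
have `v_p t ≤ e := v_p K(n)`, except for `p = 2`, `t = 2 ^ (e + 1)`, where `4 ∣ a(j, t - 1)`
makes up the difference; so `p ^ (v_p m - e)` divides all the `S(m, 2j)`, `j < n`. Conversely, with
`c = min (v_p m) e`, the index `j = 2 ^ c - 1` (for `p = 2`) or `j = (p ^ c - 1) / 2` (for odd `p`)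
leaves the term `t = p ^ c` as the only one of valuation exactly `v_p m - c`: its coefficient is
`2j + 1`, resp. `4 ^ j`, prime to `p`, and every other `t ≤ 2j + 1 < 2 p ^ c` has `v_p t < c`.
-/

open Polynomial Finset

section Binomial

variable {p : ℕ}

lemma pow_sub_dvd_of_pow_dvd_mul (hp : p.Prime) {a k x t : ℕ} (h : p ^ a ∣ x * t)
    (ht : ¬ p ^ (k + 1) ∣ t) : p ^ (a - k) ∣ x := by
  rcases eq_or_ne x 0 with rfl | hx
  · exact dvd_zero _
  have ht0 : t ≠ 0 := by rintro rfl; exact ht (dvd_zero _)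
  rw [hp.pow_dvd_iff_le_factorization (mul_ne_zero hx ht0), Nat.factorization_mul hx ht0,
    Finsupp.add_apply] at h
  rw [hp.pow_dvd_iff_le_factorization ht0] at ht
  rw [hp.pow_dvd_iff_le_factorization hx]
  omega

lemma pow_sub_dvd_choose (hp : p.Prime) {a k m t : ℕ} (hm : p ^ a ∣ m)
    (ht : ¬ p ^ (k + 1) ∣ t) : p ^ (a - k) ∣ m.choose t := by
  obtain ⟨u, rfl⟩ : ∃ u, t = u + 1 :=
    Nat.exists_eq_add_one.2 (Nat.pos_of_ne_zero (by rintro rfl; exact ht (dvd_zero _)))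
  rcases m with _ | n
  · simp
  refine pow_sub_dvd_of_pow_dvd_mul hp ?_ ht
  rw [← Nat.add_one_mul_choose_eq]
  exact hm.mul_right _

lemma mul_sub_one_mod_and_div {p N : ℕ} (hp : 0 < p) (hN : N ≠ 0) :
    (p * N - 1) % p = p - 1 ∧ (p * N - 1) / p = N - 1 := by
  have h : p * N - 1 = (p - 1) + p * (N - 1) := by
    obtain ⟨N, rfl⟩ := Nat.exists_eq_succ_of_ne_zero hN
    rw [Nat.succ_sub_one, Nat.mul_succ]
    omega
  rw [h, Nat.add_mul_mod_self_left, Nat.add_mul_div_left _ _ hp,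
    Nat.mod_eq_of_lt (by omega), Nat.div_eq_of_lt (by omega)]
  simp

lemma choose_pow_mul_sub_one_modEq_one [Fact p.Prime] (c : ℕ) {q : ℕ} (hq : q ≠ 0) :
    (p ^ c * q - 1).choose (p ^ c - 1) ≡ 1 [MOD p] := by
  have hp := (Fact.out : p.Prime).pos
  induction c with
  | zero => simp [Nat.ModEq.refl]
  | succ c ih =>
    have hN := mul_sub_one_mod_and_div hp (N := p ^ c * q) (by positivity)
    have hM := mul_sub_one_mod_and_div hp (N := p ^ c) (by positivity)
    refine (Choose.choose_modEq_choose_mod_mul_choose_div_nat).trans ?_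
    rw [pow_succ', mul_assoc, hN.1, hN.2, hM.1, hM.2, Nat.choose_self, one_mul]
    exact ih

lemma not_pow_succ_dvd_choose_prime_pow (hp : p.Prime) {c m : ℕ} (hm : m ≠ 0)
    (hc : p ^ c ∣ m) :
    ¬ p ^ (m.factorization p - c + 1) ∣ m.choose (p ^ c) := by
  have := Fact.mk hp
  obtain ⟨q, rfl⟩ := hc
  have hq : q ≠ 0 := right_ne_zero_of_mul hm
  have hcv : c ≤ (p ^ c * q).factorization p :=
    (hp.pow_dvd_iff_le_factorization hm).1 (dvd_mul_right _ _)
  have hcop : (p ^ ((p ^ c * q).factorization p + 1)).Coprime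
      ((p ^ c * q - 1).choose (p ^ c - 1)) := by
    refine Nat.Coprime.pow_left _ ((hp.coprime_iff_not_dvd).2 ?_)
    rw [Nat.dvd_iff_mod_eq_zero, choose_pow_mul_sub_one_modEq_one c hq, Nat.mod_eq_of_lt hp.one_lt]
    exact one_ne_zero
  intro h
  apply Nat.pow_succ_factorization_not_dvd hm hp
  refine hcop.dvd_of_dvd_mul_right ?_
  have := Nat.add_one_mul_choose_eq (p ^ c * q - 1) (p ^ c - 1)
  rw [Nat.sub_add_cancel (Nat.one_le_iff_ne_zero.2 hm),
    Nat.sub_add_cancel (Nat.one_le_pow _ _ hp.pos)] at this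
  rw [this]
  calc _ = p ^ ((p ^ c * q).factorization p - c + 1) * p ^ c := by
        rw [← pow_add]; congr 1; omega
    _ ∣ _ := mul_dvd_mul_right h _

end Binomial

noncomputable def smiCoeff (j s : ℕ) : ℕ :=
  (((X : ℕ[X]) + 1) * (X * (X + C 2)) ^ s).coeff (2 * j)

lemma smiCoeff_eq_ite (j s : ℕ) : smiCoeff j s =
    if s ≤ 2 * j then (((X : ℕ[X]) + 1) * (X + C 2) ^ s).coeff (2 * j - s) else 0 := by
  rw [smiCoeff, ← coeff_mul_X_pow', mul_pow]
  congr 1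
  ring

lemma smiCoeff_eq {j s : ℕ} (h : s ≤ 2 * j) :
    smiCoeff j s = (((X : ℕ[X]) + 1) * (X + C 2) ^ s).coeff (2 * j - s) := by
  rw [smiCoeff_eq_ite, if_pos h]

lemma smiCoeff_eq_zero {j s : ℕ} (h : 2 * j < s) : smiCoeff j s = 0 := by
  rw [smiCoeff_eq_ite, if_neg (by omega)]

lemma two_pow_sub_dvd_coeff_mul (q : ℕ[X]) (s k : ℕ) :
    2 ^ (s - k) ∣ (q * (X + C 2) ^ s).coeff k := by
  rw [coeff_mul]
  refine Finset.dvd_sum fun x hx => Dvd.dvd.mul_left ?_ _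
  rw [coeff_X_add_C_pow]
  exact (pow_dvd_pow 2 (by have := mem_antidiagonal.1 hx; omega)).mul_right _

lemma four_pow_sub_dvd_smiCoeff (j s : ℕ) : 4 ^ (s - j) ∣ smiCoeff j s := by
  rcases lt_or_ge (2 * j) s with h | h
  · rw [smiCoeff_eq_zero h]; exact dvd_zero _
  rw [smiCoeff_eq h, show 4 ^ (s - j) = 2 ^ (s - (2 * j - s)) by
    rw [show s - (2 * j - s) = 2 * (s - j) by omega, pow_mul]; norm_num]
  exact two_pow_sub_dvd_coeff_mul _ _ _

lemma smiCoeff_two_mul_self (j : ℕ) : smiCoeff j (2 * j) = 4 ^ j := by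
  rw [smiCoeff_eq le_rfl, Nat.sub_self, mul_coeff_zero, coeff_X_add_C_pow]
  simp [pow_mul]

lemma smiCoeff_self (j : ℕ) : smiCoeff j j = 2 * j + 1 := by
  rw [smiCoeff_eq (by omega), show 2 * j - j = j by omega]
  rcases j with _ | j
  · simp
  rw [add_mul, one_mul, coeff_add, coeff_X_mul, coeff_X_add_C_pow, coeff_X_add_C_pow]
  simp

lemma choose_two_mul_add_one_eq_sum (k j : ℕ) :
    (2 * k + 1).choose (2 * j) = ∑ s ∈ range (k + 1), smiCoeff j s * k.choose s := by
  have hpoly : ((X : ℕ[X]) + 1) ^ (2 * k + 1)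
      = ∑ s ∈ range (k + 1), ((X + 1) * (X * (X + C 2)) ^ s) * (k.choose s : ℕ[X]) := by
    rw [pow_succ', pow_mul, show ((X : ℕ[X]) + 1) ^ 2 = X * (X + C 2) + 1 by
      rw [C_ofNat]; ring, add_pow, Finset.mul_sum]
    simp only [one_pow, mul_one, mul_assoc]
  have h := congrArg (coeff · (2 * j)) hpoly
  simp only [coeff_X_add_one_pow, finsetSum_coeff, coeff_mul_natCast, Nat.cast_id] at h
  exact h

lemma Smi_two_mul_eq_sum (m j : ℕ) :
    Smi m (2 * j) = ∑ s ∈ range m, smiCoeff j s * m.choose (s + 1) := by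
  induction m with
  | zero => simp [Smi]
  | succ m ih =>
    rw [Smi, sum_Icc_succ_top (by omega), ← Smi, ih,
      show 2 * (m + 1) - 1 = 2 * m + 1 by omega, choose_two_mul_add_one_eq_sum]
    simp only [Nat.choose_succ_succ', mul_add, sum_add_distrib]
    rw [sum_range_succ (fun s => smiCoeff j s * m.choose (s + 1)), Nat.choose_succ_self, mul_zero,
      add_zero, add_comm]

lemma Kn_ne_zero (n : ℕ) : Kn n ≠ 0 := by
  rw [Kn]
  refine mul_ne_zero (by positivity) (prod_ne_zero_iff.2 fun p hp => ?_)
  exact pow_ne_zero _ (mem_filter.1 hp).2.1.ne_zero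

lemma Kn_factorization_apply (n : ℕ) {p : ℕ} (hp : p.Prime) :
    (Kn n).factorization p = if p = 2 then Nat.log 2 n else Nat.log p (2 * n) := by
  have hF : ∀ q ∈ (range (2 * n + 1)).filter (fun q => q.Prime ∧ Odd q),
      q ^ Nat.log q (2 * n) ≠ 0 := fun q hq => pow_ne_zero _ (mem_filter.1 hq).2.1.ne_zero
  rw [Kn, Nat.factorization_mul (by positivity) (prod_ne_zero_iff.2 hF),
    Nat.factorization_prod hF]
  simp only [Finsupp.add_apply, Finsupp.coe_finsetSum, Finset.sum_apply, Nat.factorization_pow,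
    Finsupp.smul_apply, smul_eq_mul, Nat.prime_two.factorization]
  rw [Finset.sum_congr rfl fun q hq => by rw [(mem_filter.1 hq).2.1.factorization]]
  simp only [Finsupp.single_apply, mul_ite, mul_one, mul_zero, sum_ite_eq', mem_filter, mem_range]
  rcases eq_or_ne p 2 with rfl | hp2
  · simp
  · simp only [if_neg hp2.symm, if_neg hp2, zero_add, hp, hp.odd_of_ne_two hp2, and_true,
      ite_eq_left_iff, not_lt]
    exact fun h => (Nat.log_eq_zero_iff.2 (Or.inl (by omega))).symm

section Valuation

variable {p : ℕ}

lemma pow_dvd_Smi_of_lt (hp : p.Prime) {e j : ℕ} (m : ℕ) (hj : 2 * j + 1 < p ^ (e + 1)) :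
    p ^ (m.factorization p - e) ∣ Smi m (2 * j) := by
  rw [Smi_two_mul_eq_sum]
  refine dvd_sum fun s _ => ?_
  rcases lt_or_ge (2 * j) s with hs | hs
  · rw [smiCoeff_eq_zero hs, zero_mul]
    exact dvd_zero _
  refine (pow_sub_dvd_choose hp (Nat.ordProj_dvd m p) fun h => ?_).mul_left _
  have := Nat.le_of_dvd s.succ_pos h
  omega

lemma two_pow_dvd_Smi_of_lt {e j : ℕ} (m : ℕ) (hj : j + 1 < 2 ^ (e + 1)) :
    2 ^ (m.factorization 2 - e) ∣ Smi m (2 * j) := by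
  rw [Smi_two_mul_eq_sum]
  refine dvd_sum fun s _ => ?_
  rcases lt_or_ge (2 * j) s with hs | hs
  · rw [smiCoeff_eq_zero hs, zero_mul]
    exact dvd_zero _
  by_cases ht : 2 ^ (e + 1) ∣ s + 1
  · have hsj : j < s := by have := Nat.le_of_dvd s.succ_pos ht; omega
    have htwo : 2 ∣ smiCoeff j s :=
      ((by norm_num : 2 ∣ 4).trans (dvd_pow_self 4 (by omega))).trans
        (four_pow_sub_dvd_smiCoeff j s)
    have hchoose : 2 ^ (m.factorization 2 - (e + 1)) ∣ m.choose (s + 1) :=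
      pow_sub_dvd_choose Nat.prime_two (Nat.ordProj_dvd m 2) fun h => by
        have := Nat.le_of_dvd s.succ_pos h
        rw [pow_succ] at this
        omega
    calc 2 ^ (m.factorization 2 - e) ∣ 2 * 2 ^ (m.factorization 2 - (e + 1)) := by
          rw [← pow_succ']; exact pow_dvd_pow 2 (by omega)
      _ ∣ smiCoeff j s * m.choose (s + 1) := mul_dvd_mul htwo hchoose
  · exact (pow_sub_dvd_choose Nat.prime_two (Nat.ordProj_dvd m 2) ht).mul_left _

lemma not_dvd_of_lt_two_mul {d t : ℕ} (ht : 0 < t) (h2 : t < 2 * d) (hne : t ≠ d) :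
    ¬ d ∣ t := by
  rintro ⟨r, rfl⟩
  rcases r with _ | _ | r
  · omega
  · omega
  · nlinarith

lemma not_pow_dvd_Smi (hp : p.Prime) {c j m : ℕ} (hm : m ≠ 0) (hcm : p ^ c ∣ m)
    (hj : 2 * j + 1 < 2 * p ^ c) (hcoeff : ¬ p ∣ smiCoeff j (p ^ c - 1)) :
    ¬ p ^ (m.factorization p - c + 1) ∣ Smi m (2 * j) := by
  have hpc : 0 < p ^ c := pow_pos hp.pos c
  have hcv : c ≤ m.factorization p := (hp.pow_dvd_iff_le_factorization hm).1 hcm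
  have hmem : p ^ c - 1 ∈ range m :=
    mem_range.2 (by have := Nat.le_of_dvd (Nat.pos_of_ne_zero hm) hcm; omega)
  have hrest : p ^ (m.factorization p - c + 1) ∣
      ∑ s ∈ (range m).erase (p ^ c - 1), smiCoeff j s * m.choose (s + 1) := by
    refine dvd_sum fun s hs => ?_
    rcases lt_or_ge (2 * j) s with h2s | h2s
    · rw [smiCoeff_eq_zero h2s, zero_mul]
      exact dvd_zero _
    have hndvd : ¬ p ^ c ∣ s + 1 :=
      not_dvd_of_lt_two_mul s.succ_pos (by omega) (by have := ne_of_mem_erase hs; omega)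
    obtain ⟨k, rfl⟩ : ∃ k, c = k + 1 :=
      Nat.exists_eq_add_one.2 (Nat.pos_of_ne_zero fun hc => hndvd (by simp [hc]))
    rw [show m.factorization p - (k + 1) + 1 = m.factorization p - k by omega]
    exact (pow_sub_dvd_choose hp (Nat.ordProj_dvd m p) hndvd).mul_left _
  have hlead : ¬ p ^ (m.factorization p - c + 1) ∣ smiCoeff j (p ^ c - 1) * m.choose (p ^ c) :=
    fun h => not_pow_succ_dvd_choose_prime_pow hp hm hcm <|
      (Nat.Coprime.pow_left _ ((hp.coprime_iff_not_dvd).2 hcoeff)).dvd_of_dvd_mul_left h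
  rw [Smi_two_mul_eq_sum, ← sum_erase_add _ _ hmem, Nat.sub_add_cancel hpc]
  exact fun h => hlead ((Nat.dvd_add_right hrest).1 h)

lemma pow_dvd_Smi (hp : p.Prime) {j n : ℕ} (m : ℕ) (hj : j < n) :
    p ^ (m.factorization p - (Kn n).factorization p) ∣ Smi m (2 * j) := by
  rw [Kn_factorization_apply n hp]
  rcases eq_or_ne p 2 with rfl | hp2
  · have : n < 2 ^ (Nat.log 2 n + 1) := Nat.lt_pow_succ_log_self one_lt_two n
    rw [if_pos rfl]
    exact two_pow_dvd_Smi_of_lt m (by omega)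
  · have : 2 * n < p ^ (Nat.log p (2 * n) + 1) := Nat.lt_pow_succ_log_self hp.one_lt _
    rw [if_neg hp2]
    exact pow_dvd_Smi_of_lt hp m (by omega)

lemma exists_not_pow_dvd_Smi (hp : p.Prime) {n m : ℕ} (hn : n ≠ 0) (hm : m ≠ 0) :
    ∃ j < n, ¬ p ^ (m.factorization p - (Kn n).factorization p + 1) ∣ Smi m (2 * j) := by
  set c := min (m.factorization p) ((Kn n).factorization p)
  have hcm : p ^ c ∣ m := (pow_dvd_pow p (min_le_left _ _)).trans (Nat.ordProj_dvd m p)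
  have hcK : p ^ c ≤ p ^ (Kn n).factorization p :=
    pow_le_pow_right₀ hp.one_le (min_le_right _ _)
  rw [show m.factorization p - (Kn n).factorization p = m.factorization p - c by omega]
  rw [Kn_factorization_apply n hp] at hcK
  rcases eq_or_ne p 2 with rfl | hp2
  · rw [if_pos rfl] at hcK
    have := (Nat.pow_log_le_self 2 hn).trans' hcK
    have hpos := Nat.one_le_two_pow (n := c)
    refine ⟨2 ^ c - 1, by omega, not_pow_dvd_Smi hp hm hcm (by omega) ?_⟩
    rw [smiCoeff_self]
    omega
  · rw [if_neg hp2] at hcK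
    have hodd : Odd (p ^ c) := (hp.odd_of_ne_two hp2).pow
    have h2j := Nat.two_mul_div_two_add_one_of_odd hodd
    have := (Nat.pow_log_le_self p (by omega)).trans' hcK
    refine ⟨p ^ c / 2, by omega, not_pow_dvd_Smi hp hm hcm (by omega) ?_⟩
    rw [show p ^ c - 1 = 2 * (p ^ c / 2) by omega, smiCoeff_two_mul_self,
      show (4 : ℕ) = 2 ^ 2 by rfl, ← pow_mul]
    exact fun h => hp2 ((Nat.prime_dvd_prime_iff_eq hp Nat.prime_two).1 (hp.dvd_of_dvd_pow h))

end Valuation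

lemma factorization_gcd_eq {ι : Type*} {s : Finset ι} {f : ι → ℕ} {p a : ℕ} {i : ι}
    (hp : p.Prime) (hs : s.gcd f ≠ 0) (hdvd : ∀ i ∈ s, p ^ a ∣ f i) (hi : i ∈ s)
    (hndvd : ¬ p ^ (a + 1) ∣ f i) : (s.gcd f).factorization p = a := by
  refine le_antisymm (not_lt.1 fun h => hndvd ?_) ((hp.pow_dvd_iff_le_factorization hs).1
    (dvd_gcd hdvd))
  exact ((hp.pow_dvd_iff_le_factorization hs).2 h).trans (gcd_dvd hi)

lemma factorization_div_gcd {m k : ℕ} (hm : m ≠ 0) (hk : k ≠ 0) (p : ℕ) :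
    (m / m.gcd k).factorization p = m.factorization p - k.factorization p := by
  rw [Nat.factorization_div (Nat.gcd_dvd_left m k), Finsupp.tsub_apply,
    Nat.factorization_gcd hm hk, Finsupp.inf_apply]
  omega

theorem stmt11_general (n m : ℕ) (hn : 1 ≤ n) :
    Finset.gcd (Finset.Icc 1 n) (fun i => Smi m (2*(i-1))) = m / Nat.gcd m (Kn n) := by
  rcases eq_or_ne m 0 with rfl | hm
  · simp [Smi, Finset.gcd_eq_zero_iff]
  have hg : (Icc 1 n).gcd (fun i => Smi m (2 * (i - 1))) ≠ 0 := by
    rw [Ne, Finset.gcd_eq_zero_iff]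
    exact fun h => hm (by simpa [Smi] using h 1 (mem_Icc.2 ⟨le_rfl, hn⟩))
  have hm' := Nat.pos_of_ne_zero hm
  have hdiv : m / m.gcd (Kn n) ≠ 0 :=
    (Nat.div_pos (Nat.gcd_le_left _ hm') (Nat.gcd_pos_of_pos_left _ hm')).ne'
  refine Nat.eq_of_factorization_eq hg hdiv fun p => ?_
  by_cases hp : p.Prime
  · rw [factorization_div_gcd hm (Kn_ne_zero n)]
    obtain ⟨j, hj, hndvd⟩ := exists_not_pow_dvd_Smi hp (Nat.one_le_iff_ne_zero.1 hn) hm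
    have hmem : j + 1 ∈ Icc 1 n := mem_Icc.2 ⟨by omega, hj⟩
    refine factorization_gcd_eq hp hg (fun i hi => pow_dvd_Smi hp m ?_) hmem (by simpa using hndvd)
    have := mem_Icc.1 hi
    omega
  · simp [Nat.factorization_eq_zero_of_not_prime _ hp]

/-- Theorem 4.4: the Braun–Douglas number
`d(m,n) = gcd{ S(m, 2(i-1)) : 1 ≤ i ≤ n }` equals `m / gcd(m, K(n))`. -/
theorem stmt11 (n m : ℕ) (hn : 1 ≤ n) (hm : n + 2 ≤ m) :
    Finset.gcd (Finset.Icc 1 n) (fun i => Smi m (2*(i-1))) = m / Nat.gcd m (Kn n) :=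
  stmt11_general n m hn
end
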